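/- arXiv:2308.01411 — 2 statements merged into one kernel-verified Lean document; each statement's English description precedes it below -/
import Mathlib

section
/- Suppose a sequence (v_i)_{i∈ℤ} of reals is updated by v_i^{new} = v_i − a_{i−1/2} (v_i − v_{i−1}) + b_{i+1/2} (v_{i+1} − v_i), where for all i the coefficients satisfy a_{i+1/2} ≥ 0, b_{i+1/2} ≥ 0 and a_{i+1/2} + b_{i+1/2} ≤ 1. Then the total variation does not increase: ∑_{i∈ℤ} |v_{i+1}^{new} − v_i^{new}| ≤ ∑_{i∈ℤ} |v_{i+1} − v_i|, provided both sums are finite. -/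
/-!
The new differences are convex combinations of old ones:
`Δvⁿᵉʷ_i = (1 - a_{i+1/2} - b_{i+1/2}) Δv_i + a_{i-1/2} Δv_{i-1} + b_{i+3/2} Δv_{i+1}`
with `Δv_i = v_{i+1} - v_i`. Taking absolute values, `|Δv_i|` is split into the three
nonnegative parts `1 - a - b`, `a`, `b` of total mass one, which are moved to the indices
`i`, `i + 1`, `i - 1`; summing over `ℤ`, this redistribution preserves the total.
-/

/-- The incremental-form update; `a i` and `b i` stand for `a_{i+1/2}` and `b_{i+1/2}`. -/
def incrementalUpdate (a b v : ℤ → ℝ) (i : ℤ) : ℝ :=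
  v i - a (i - 1) * (v i - v (i - 1)) + b i * (v (i + 1) - v i)

/- The indices `i - 1 + 1` and `i + 1 + 1` are kept unsimplified so that every difference has
the form `v (j + 1) - v j`. -/
lemma incrementalUpdate_succ_sub (a b v : ℤ → ℝ) (i : ℤ) :
    incrementalUpdate a b v (i + 1) - incrementalUpdate a b v i =
      (1 - a i - b i) * (v (i + 1) - v i) + a (i - 1) * (v (i - 1 + 1) - v (i - 1))
        + b (i + 1) * (v (i + 1 + 1) - v (i + 1)) := by
  simp only [incrementalUpdate, add_sub_cancel_right, sub_add_cancel]
  ring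

lemma abs_incrementalUpdate_succ_sub_le {a b : ℤ → ℝ} (ha : ∀ i, 0 ≤ a i) (hb : ∀ i, 0 ≤ b i)
    (hab : ∀ i, a i + b i ≤ 1) (v : ℤ → ℝ) (i : ℤ) :
    |incrementalUpdate a b v (i + 1) - incrementalUpdate a b v i| ≤
      (1 - a i - b i) * |v (i + 1) - v i| + a (i - 1) * |v (i - 1 + 1) - v (i - 1)|
        + b (i + 1) * |v (i + 1 + 1) - v (i + 1)| := by
  rw [incrementalUpdate_succ_sub]
  refine (abs_add_three _ _ _).trans_eq ?_
  rw [abs_mul, abs_mul, abs_mul, abs_of_nonneg (by linarith [hab i]),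
    abs_of_nonneg (ha (i - 1)), abs_of_nonneg (hb (i + 1))]

lemma hasSum_redistribute {R : Type*} [Ring R] [TopologicalSpace R] [IsTopologicalAddGroup R]
    {D a b : ℤ → R} {s : R} (hD : HasSum D s)
    (haD : Summable fun i => a i * D i) (hbD : Summable fun i => b i * D i) :
    HasSum (fun i => (1 - a i - b i) * D i + a (i - 1) * D (i - 1) + b (i + 1) * D (i + 1)) s := by
  have ha' : HasSum (fun i => a (i - 1) * D (i - 1)) (∑' i, a i * D i) :=
    (Equiv.subRight (1 : ℤ)).hasSum_iff (f := fun i => a i * D i) |>.mpr haD.hasSum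
  have hb' : HasSum (fun i => b (i + 1) * D (i + 1)) (∑' i, b i * D i) :=
    (Equiv.addRight (1 : ℤ)).hasSum_iff (f := fun i => b i * D i) |>.mpr hbD.hasSum
  have h := (((hD.sub haD.hasSum).sub hbD.hasSum).add ha').add hb'
  rw [sub_sub, add_assoc, sub_add_cancel] at h
  simpa only [sub_mul, one_mul] using h

lemma tsum_le_of_le_redistribute {D f a b : ℤ → ℝ} (hD : Summable D) (hD0 : ∀ i, 0 ≤ D i)
    (hf0 : ∀ i, 0 ≤ f i) (ha : ∀ i, 0 ≤ a i) (hb : ∀ i, 0 ≤ b i) (hab : ∀ i, a i + b i ≤ 1)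
    (hf : ∀ i, f i ≤ (1 - a i - b i) * D i + a (i - 1) * D (i - 1) + b (i + 1) * D (i + 1)) :
    ∑' i, f i ≤ ∑' i, D i := by
  have hweighted {c : ℤ → ℝ} (hc : ∀ i, 0 ≤ c i) (hc1 : ∀ i, c i ≤ 1) :
      Summable fun i => c i * D i :=
    hD.of_nonneg_of_le (fun i => mul_nonneg (hc i) (hD0 i))
      (fun i => mul_le_of_le_one_left (hD0 i) (hc1 i))
  have hmajorant := hasSum_redistribute hD.hasSum
    (hweighted ha fun i => by linarith [hab i, hb i])
    (hweighted hb fun i => by linarith [hab i, ha i])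
  exact hasSum_le hf (hmajorant.summable.of_nonneg_of_le hf0 hf).hasSum hmajorant

theorem harten_tvd_general
    (v vnew a b : ℤ → ℝ)
    (ha : ∀ i, 0 ≤ a i) (hb : ∀ i, 0 ≤ b i)
    (hab : ∀ i, a i + b i ≤ 1)
    (hupd : ∀ i, vnew i = v i - a (i - 1) * (v i - v (i - 1)) + b i * (v (i + 1) - v i))
    (hsum : Summable fun i => |v (i + 1) - v i|) :
    (∑' i : ℤ, |vnew (i + 1) - vnew i|) ≤ ∑' i : ℤ, |v (i + 1) - v i| := by
  obtain rfl : vnew = incrementalUpdate a b v := funext hupd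
  exact tsum_le_of_le_redistribute hsum (fun _ => abs_nonneg _) (fun _ => abs_nonneg _) ha hb hab
    (abs_incrementalUpdate_succ_sub_le ha hb hab v)

/-- Harten's lemma: for an incremental-form update
`vⁿᵉʷ_i = v_i − a_{i−1/2}(v_i − v_{i−1}) + b_{i+1/2}(v_{i+1} − v_i)` with
`a_{i+1/2}, b_{i+1/2} ≥ 0` and `a_{i+1/2} + b_{i+1/2} ≤ 1`, the total variation does not
increase.  Here `a i`, `b i` denote `a_{i+1/2}`, `b_{i+1/2}`. -/
theorem harten_tvd
    (v vnew a b : ℤ → ℝ)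
    (ha : ∀ i, 0 ≤ a i) (hb : ∀ i, 0 ≤ b i)
    (hab : ∀ i, a i + b i ≤ 1)
    (hupd : ∀ i, vnew i = v i - a (i - 1) * (v i - v (i - 1)) + b i * (v (i + 1) - v i))
    (hsum : Summable fun i => |v (i + 1) - v i|)
    (hsumnew : Summable fun i => |vnew (i + 1) - vnew i|) :
    (∑' i : ℤ, |vnew (i + 1) - vnew i|) ≤ ∑' i : ℤ, |v (i + 1) - v i| :=
  harten_tvd_general v vnew a b ha hb hab hupd hsum
end

section
/- Let μ ∈ BV(ℝ) ∩ C¹(ℝ) and let (U_p)_{p∈ℤ} be nonnegative reals with Δx ∑_p U_p ≤ C₀. Define c_{i+1/2} = Δx ∑_{p∈ℤ} μ(x_{i+1/2 − p}) U_p on a grid with spacing Δx. Then ∑_{i∈ℤ} |c_{i+1/2} − c_{i−1/2}| ≤ C₀ TV(μ), uniformly in Δx. -/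
open MeasureTheory

/-!
Each increment `c_{i+1/2} - c_{i-1/2} = Δx ∑_p (μ(x_{i+1/2-p}) - μ(x_{i-1/2-p})) U_p` is bounded
termwise by the fundamental theorem of calculus: `|μ(x_{j+1/2}) - μ(x_{j-1/2})| ≤ ∫_{C_j} |μ'|`.
Summing the resulting nonnegative double series over `i` first, the cells `C_{i-p}` tile `ℝ` for
each fixed `p`, so the total is at most `(Δx ∑_p U_p) ∫ |μ'| ≤ C₀ TV(μ)`.
-/

theorem abs_sub_le_intervalIntegral_abs_deriv {f : ℝ → ℝ} {a b : ℝ} (hf : Differentiable ℝ f)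
    (hf' : IntervalIntegrable (deriv f) volume a b) (hab : a ≤ b) :
    |f b - f a| ≤ ∫ x in a..b, |deriv f x| := by
  rw [← intervalIntegral.integral_deriv_eq_sub (fun x _ => hf x) hf']
  exact intervalIntegral.abs_integral_le_integral_abs hab

theorem abs_sub_le_integral_abs_deriv {f : ℝ → ℝ} (hf : Differentiable ℝ f)
    (hf' : Integrable (deriv f)) (x y : ℝ) :
    |f x - f y| ≤ ∫ t, |deriv f t| := by
  wlog hyx : y ≤ x generalizing x y
  · rw [abs_sub_comm]
    exact this y x (le_of_not_ge hyx)
  calc |f x - f y| ≤ ∫ t in y..x, |deriv f t| :=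
        abs_sub_le_intervalIntegral_abs_deriv hf hf'.intervalIntegrable hyx
    _ = ∫ t in Set.Ioc y x, |deriv f t| := intervalIntegral.integral_of_le hyx
    _ ≤ ∫ t, |deriv f t| :=
        setIntegral_le_integral hf'.abs (.of_forall fun _ => abs_nonneg _)

theorem MeasureTheory.Integrable.hasSum_intervalIntegral_add_mul {f : ℝ → ℝ} {μ : Measure ℝ}
    (hfi : Integrable f μ) (y : ℝ) {h : ℝ} (hh : 0 < h) :
    HasSum (fun n : ℤ => ∫ x in y + n * h..y + (n + 1) * h, f x ∂μ) (∫ x, f x ∂μ) := by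
  have hle (n : ℤ) : y + n * h ≤ y + (n + 1) * h := by linarith
  simp_rw [intervalIntegral.integral_of_le (hle _)]
  rw [← setIntegral_univ, ← iUnion_Ioc_add_zsmul hh y]
  simpa only [zsmul_eq_mul, Int.cast_add, Int.cast_one] using
    hasSum_integral_iUnion (fun _ => measurableSet_Ioc)
      (Set.pairwise_disjoint_Ioc_add_zsmul y h) hfi.integrableOn

theorem tsum_abs_sub_convolution_le {v U w : ℤ → ℝ} {M : ℝ} (hv : ∀ j, |v j| ≤ M)
    (hU : Summable U) (hw : ∀ j, |v j - v (j - 1)| ≤ w j) (hws : Summable w) :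
    ∑' i, |∑' p, v (i - p) * U p - ∑' p, v (i - 1 - p) * U p| ≤ (∑' p, |U p|) * ∑' j, w j := by
  have hconv (i : ℤ) : Summable fun p => v (i - p) * U p :=
    (hU.abs.mul_left M).of_norm_bounded fun p => by
      rw [Real.norm_eq_abs, abs_mul]
      exact mul_le_mul_of_nonneg_right (hv _) (abs_nonneg _)
  have hw₀ (j : ℤ) : 0 ≤ w j := (abs_nonneg _).trans (hw j)
  let shear : ℤ × ℤ ≃ ℤ × ℤ :=
    { toFun := fun q => (q.1 + q.2, q.2)
      invFun := fun q => (q.1 - q.2, q.2)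
      left_inv := fun q => by simp
      right_inv := fun q => by simp }
  have hprod : HasSum (fun q : ℤ × ℤ => w (q.1 - q.2) * |U q.2|) ((∑' j, w j) * ∑' p, |U p|) := by
    rw [← shear.hasSum_iff]
    simpa [shear, Function.comp_def] using hws.hasSum.mul hU.abs.hasSum
      (hws.mul_of_nonneg hU.abs hw₀ fun _ => abs_nonneg _)
  have hmajor : HasSum (fun i => ∑' p, w (i - p) * |U p|) ((∑' j, w j) * ∑' p, |U p|) :=
    hprod.prod_fiberwise fun i => (hprod.summable.prod_factor i).hasSum
  have hpoint (i : ℤ) :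
      |∑' p, v (i - p) * U p - ∑' p, v (i - 1 - p) * U p| ≤ ∑' p, w (i - p) * |U p| := by
    rw [← (hconv i).tsum_sub (hconv (i - 1)), ← Real.norm_eq_abs]
    refine tsum_of_norm_bounded (hprod.summable.prod_factor i).hasSum fun p => ?_
    rw [Real.norm_eq_abs, ← sub_mul, abs_mul, sub_sub, add_comm 1, ← sub_sub]
    exact mul_le_mul_of_nonneg_right (hw _) (abs_nonneg _)
  rw [mul_comm, ← hmajor.tsum_eq]
  exact (hmajor.summable.of_nonneg_of_le (fun _ => abs_nonneg _) hpoint).tsum_le_tsum hpoint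
    hmajor.summable

/-- BV bound on the discrete convolution increments: for `μ ∈ BV ∩ C¹` with
`TV(μ) = ∫|μ′|`, nonnegative `(U_p)` with `Δx ∑ U_p ≤ C₀`, and
`c_{i+1/2} = Δx ∑_p μ(x_{i+1/2−p}) U_p` with `x_{i+1/2} = (i+1/2)Δx`, one has
`∑ᵢ |c_{i+1/2} − c_{i−1/2}| ≤ C₀ TV(μ)` uniformly in `Δx`.
Here `c i` denotes `c_{i+1/2}`. -/
theorem discrete_convolution_bv
    (μ : ℝ → ℝ) (U : ℤ → ℝ) (Δx C₀ : ℝ)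
    (hμ : ContDiff ℝ 1 μ)
    (hμ' : Integrable (deriv μ))
    (hΔx : 0 < Δx)
    (hU : ∀ p, 0 ≤ U p) (hUs : Summable U)
    (hC₀ : Δx * (∑' p : ℤ, U p) ≤ C₀)
    (c : ℤ → ℝ)
    (hc : ∀ i : ℤ, c i = Δx * ∑' p : ℤ, μ ((((i : ℝ) - (p : ℝ)) + 1 / 2) * Δx) * U p) :
    (∑' i : ℤ, |c i - c (i - 1)|) ≤ C₀ * ∫ x : ℝ, |deriv μ x| := by
  have hμd : Differentiable ℝ μ := hμ.differentiable one_ne_zero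
  -- `v j = μ(x_{j+1/2})` and `w j = ∫_{C_j} |μ'|` with `C_j = (x_{j-1/2}, x_{j+1/2}]`.
  set v : ℤ → ℝ := fun j => μ ((j + 1 / 2) * Δx)
  set w : ℤ → ℝ := fun n => ∫ x in -(Δx / 2) + n * Δx..-(Δx / 2) + (n + 1) * Δx, |deriv μ x|
  have hcells : HasSum w (∫ x, |deriv μ x|) := hμ'.abs.hasSum_intervalIntegral_add_mul _ hΔx
  have hv (j : ℤ) : |v j| ≤ |μ 0| + ∫ x, |deriv μ x| := by
    have := abs_sub_le_integral_abs_deriv hμd hμ' ((j + 1 / 2) * Δx) 0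
    linarith [abs_sub_abs_le_abs_sub (v j) (μ 0)]
  have hw (j : ℤ) : |v j - v (j - 1)| ≤ w j := by
    have hle : -(Δx / 2) + j * Δx ≤ -(Δx / 2) + (j + 1) * Δx := by linarith
    convert abs_sub_le_intervalIntegral_abs_deriv hμd hμ'.intervalIntegrable hle using 3 <;>
      (simp only [v]; push_cast; ring_nf)
  have hcv (i : ℤ) : c i = Δx * ∑' p, v (i - p) * U p := by
    simp only [hc, v, Int.cast_sub]
  calc (∑' i, |c i - c (i - 1)|)
      = Δx * ∑' i, |∑' p, v (i - p) * U p - ∑' p, v (i - 1 - p) * U p| := by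
        simp_rw [hcv, ← mul_sub, abs_mul, abs_of_pos hΔx, tsum_mul_left]
    _ ≤ Δx * ((∑' p, |U p|) * ∑' j, w j) :=
        mul_le_mul_of_nonneg_left (tsum_abs_sub_convolution_le hv hUs hw hcells.summable) hΔx.le
    _ = (Δx * ∑' p, U p) * ∫ x, |deriv μ x| := by
        simp_rw [abs_of_nonneg (hU _), hcells.tsum_eq]; ring
    _ ≤ C₀ * ∫ x, |deriv μ x| :=
        mul_le_mul_of_nonneg_right hC₀ (integral_nonneg fun _ => abs_nonneg _)
end
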